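/- Let 1 ≤ s ≤ m and let r be an integer with s−1 ≤ r ≤ m. For every codeword c of the Reed–Muller code RM(r,m) and every mask x ∈ M(s,m), the masked word c + x is again a codeword of RM(r,m). -/

import Mathlib

/-- The recursively constructed mask set `M(s, m)`, viewed as a set of vectors of
length `2^m` indexed by the points of `𝔽₂^m` (i.e. functions `(Fin m → ZMod 2) → ZMod 2`).
For a point `p : Fin (m+1) → ZMod 2`, the coordinate `p 0` selects the half
(left half for `p 0 = 0`) and `Fin.tail p` the position inside that half, so that
the concatenation `[x, y]` corresponds to
`fun p => if p 0 = 0 then x (Fin.tail p) else y (Fin.tail p)`. -/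
def maskSet : (m : ℕ) → ℕ → Set ((Fin m → ZMod 2) → ZMod 2)
  | 0, _ => Set.univ
  | m + 1, s =>
    if s ≤ 1 then {fun _ => 0, fun _ => 1}
    else if m + 1 ≤ Nat.clog 2 s then Set.univ
    else
      ((fun g : (Fin m → ZMod 2) → ZMod 2 => fun p => g (Fin.tail p)) '' maskSet m s) ∪
        ⋃ i ∈ Finset.Ico 1 s,
          {f | ∃ x ∈ maskSet m i, ∃ y ∈ maskSet m (s - i),
            f = fun p => if p 0 = 0 then x (Fin.tail p) else y (Fin.tail p)}

/-- The Reed–Muller code `RM(r, m)`: the set of evaluation vectors over `𝔽₂^m` of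
polynomials in `m` variables over `𝔽₂` of total degree at most `r`. -/
def RMCode (r m : ℕ) : Set ((Fin m → ZMod 2) → ZMod 2) :=
  {f | ∃ q : MvPolynomial (Fin m) (ZMod 2),
    q.totalDegree ≤ r ∧ ∀ x : Fin m → ZMod 2, f x = MvPolynomial.eval x q}

open MvPolynomial

lemma zmod2_cases (a : ZMod 2) : a = 0 ∨ a = 1 := by revert a; decide

lemma exists_poly (m : ℕ) (f : (Fin m → ZMod 2) → ZMod 2) :
    ∃ q : MvPolynomial (Fin m) (ZMod 2), q.totalDegree ≤ m ∧
      ∀ x, f x = MvPolynomial.eval x q := by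
  classical
  refine ⟨∑ a : Fin m → ZMod 2, C (f a) * ∏ i, (X i + C (a i) + 1), ?_, ?_⟩
  · refine (totalDegree_finset_sum _ _).trans (Finset.sup_le fun a _ => ?_)
    refine (totalDegree_mul _ _).trans ?_
    simp only [totalDegree_C, zero_add]
    refine (totalDegree_finset_prod _ _).trans ?_
    calc ∑ i : Fin m, ((X i + C (a i) + 1 : MvPolynomial (Fin m) (ZMod 2)).totalDegree)
        ≤ ∑ _i : Fin m, 1 := Finset.sum_le_sum (fun i _ => ?_)
      _ = m := by simp
    refine (totalDegree_add _ _).trans (max_le ((totalDegree_add _ _).trans (max_le ?_ ?_)) ?_)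
    · simp [totalDegree_X]
    · simp
    · simpa using (totalDegree_one (σ := Fin m) (R := ZMod 2)).le
  · intro x
    rw [map_sum, Finset.sum_eq_single x]
    · simp only [map_mul, eval_C, map_prod, map_add, eval_X, map_one]
      have : ∀ i : Fin m, x i + x i + 1 = (1 : ZMod 2) := by
        intro i; rcases zmod2_cases (x i) with h | h <;> rw [h] <;> decide
      simp [this]
    · intro a _ ha
      have : ∃ i, a i ≠ x i := by
        by_contra h; push_neg at h; exact ha (funext h)
      obtain ⟨i, hi⟩ := this
      simp only [map_mul, eval_C, map_prod, map_add, eval_X, map_one]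
      have : x i + a i + 1 = (0 : ZMod 2) := by
        rcases zmod2_cases (x i) with h | h <;> rcases zmod2_cases (a i) with h' | h' <;>
          first
          | (exact absurd (h'.trans h.symm) hi)
          | (rw [h, h']; decide)
      rw [Finset.prod_eq_zero (Finset.mem_univ i) this, mul_zero]
    · simp

lemma mask_mem (m : ℕ) : ∀ s, 1 ≤ s → maskSet m s ⊆ RMCode (s - 1) m := by
  induction m with
  | zero =>
    intro s hs f _
    refine ⟨MvPolynomial.C (f (fun i => i.elim0)), by simp, fun x => ?_⟩
    rw [eval_C]
    congr 1
    exact Subsingleton.elim _ _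
  | succ m ih =>
    intro s hs f hf
    simp only [maskSet] at hf
    by_cases h1 : s ≤ 1
    · rw [if_pos h1] at hf
      rcases hf with h | h
      · exact ⟨0, by simp, fun x => by rw [h]; simp⟩
      · exact ⟨1, by simp, fun x => by rw [Set.mem_singleton_iff] at h; rw [h]; simp⟩
    · rw [if_neg h1] at hf
      by_cases h2 : m + 1 ≤ Nat.clog 2 s
      · obtain ⟨q, hq, he⟩ := exists_poly (m + 1) f
        refine ⟨q, hq.trans ?_, he⟩
        have h3 : ¬ s ≤ 2 ^ m := fun hle =>
          absurd ((Nat.clog_le_iff_le_pow (by norm_num)).mpr hle) (by omega)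
        have h4 : m < 2 ^ m := Nat.lt_two_pow_self
        omega
      · rw [if_neg h2] at hf
        rcases hf with ⟨g, hg, hgf⟩ | hf
        · obtain ⟨q, hq, he⟩ := ih s hs hg
          refine ⟨rename Fin.succ q, (totalDegree_rename_le _ _).trans hq, fun p => ?_⟩
          rw [← hgf, eval_rename]
          exact he (Fin.tail p)
        · simp only [Set.mem_iUnion, Finset.mem_Ico] at hf
          obtain ⟨i, ⟨hi1, hi2⟩, xx, hxx, yy, hyy, hfe⟩ := hf
          obtain ⟨qx, hqx, hex⟩ := ih i hi1 hxx
          obtain ⟨qy, hqy, hey⟩ := ih (s - i) (by omega) hyy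
          refine ⟨(1 + X 0) * rename Fin.succ qx + X 0 * rename Fin.succ qy, ?_, ?_⟩
          · refine (totalDegree_add _ _).trans (max_le ?_ ?_)
            · refine (totalDegree_mul _ _).trans ?_
              have hd : (1 + X 0 : MvPolynomial (Fin (m+1)) (ZMod 2)).totalDegree ≤ 1 :=
                (totalDegree_add _ _).trans (max_le (by simp) (by simp [totalDegree_X]))
              have := (totalDegree_rename_le Fin.succ qx).trans hqx
              omega
            · refine (totalDegree_mul _ _).trans ?_
              have := (totalDegree_rename_le Fin.succ qy).trans hqy
              rw [totalDegree_X]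
              omega
          · intro p
            rw [hfe]
            simp only [map_add, map_mul, eval_X, map_one, eval_rename, map_one]
            have hx := (hex (Fin.tail p)).symm
            have hy := (hey (Fin.tail p)).symm
            have htail : (p ∘ Fin.succ) = Fin.tail p := rfl
            rw [htail, hx, hy]
            have h11 : (1 : ZMod 2) + 1 = 0 := by decide
            rcases zmod2_cases (p 0) with h | h <;> rw [h] <;>
              simp [h11, one_ne_zero]

/-- Masking preserves Reed–Muller codewords: for `s - 1 ≤ r ≤ m`, adding any mask of
`M(s,m)` to a codeword of `RM(r,m)` yields again a codeword of `RM(r,m)`. -/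
theorem masked_codeword_mem_RM (s m r : ℕ) (hs : 1 ≤ s) (hsm : s ≤ m)
    (hr₁ : s - 1 ≤ r) (hr₂ : r ≤ m)
    (c : (Fin m → ZMod 2) → ZMod 2) (hc : c ∈ RMCode r m)
    (x : (Fin m → ZMod 2) → ZMod 2) (hx : x ∈ maskSet m s) :
    c + x ∈ RMCode r m := by
  obtain ⟨qc, hqc, hec⟩ := hc
  obtain ⟨qx, hqx, hex⟩ := mask_mem m s hs hx
  exact ⟨qc + qx, (totalDegree_add _ _).trans (max_le hqc (hqx.trans hr₁)),
    fun p => by simp [Pi.add_apply, hec p, hex p]⟩
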